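/- arXiv:2007.12503 — 4 statements merged into one kernel-verified Lean document; each statement's English description precedes it below -/
import Mathlib

section
/- If G is a finite group with at least three distinct nontrivial proper normal subgroups such that any two distinct nontrivial proper normal subgroups generate G, then G is isomorphic to C_p × C_p for some prime p. -/
/-- If a finite group has at least three distinct nontrivial proper normal subgroups and any
two distinct nontrivial proper normal subgroups generate the group, then it is isomorphic to
`C_p × C_p` for some prime `p`. -/
theorem stmt_3 (G : Type) [Group G] [Finite G]
    (h3 : ∃ N₁ N₂ N₃ : Subgroup G, N₁.Normal ∧ N₂.Normal ∧ N₃.Normal ∧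
      N₁ ≠ N₂ ∧ N₁ ≠ N₃ ∧ N₂ ≠ N₃ ∧
      ⊥ < N₁ ∧ N₁ < ⊤ ∧ ⊥ < N₂ ∧ N₂ < ⊤ ∧ ⊥ < N₃ ∧ N₃ < ⊤)
    (hgen : ∀ M N : Subgroup G, M.Normal → N.Normal → ⊥ < M → M < ⊤ → ⊥ < N → N < ⊤ →
      M ≠ N → M ⊔ N = ⊤) :
    ∃ p : ℕ, p.Prime ∧ Nonempty (G ≃* Multiplicative (ZMod p × ZMod p)) := by
  classical
  obtain ⟨N₁, N₂, N₃, hn1, hn2, hn3, h12, h13, h23, b1, t1, b2, t2, b3, t3⟩ := h3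
  -- any two distinct nontrivial proper normal subgroups are disjoint
  have key : ∀ M N : Subgroup G, M.Normal → N.Normal → ⊥ < M → M < ⊤ → ⊥ < N → N < ⊤ →
      M ≠ N → Disjoint M N := by
    intro M N hM hN bM tM bN tN hMN
    rw [disjoint_iff]
    by_contra h
    have hInf : (M ⊓ N).Normal := by
      constructor
      intro x hx g
      rw [Subgroup.mem_inf] at hx ⊢
      exact ⟨hM.conj_mem _ hx.1 g, hN.conj_mem _ hx.2 g⟩
    have hne : M ⊓ N ≠ M := by
      intro he
      have hle : M ≤ N := he ▸ inf_le_right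
      have := hgen M N hM hN bM tM bN tN hMN
      rw [sup_eq_right.mpr hle] at this
      exact tN.ne this
    have := hgen (M ⊓ N) M hInf hM (bot_lt_iff_ne_bot.mpr h)
      (lt_of_le_of_lt inf_le_left tM) bM tM hne
    rw [sup_eq_right.mpr inf_le_left] at this
    exact tM.ne this
  have d12 := key N₁ N₂ hn1 hn2 b1 t1 b2 t2 h12
  have d13 := key N₁ N₃ hn1 hn3 b1 t1 b3 t3 h13
  have d23 := key N₂ N₃ hn2 hn3 b2 t2 b3 t3 h23
  -- every element of `G` commutes with every element of `N₁` and of `N₂`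
  have hc : ∀ (M N P : Subgroup G), M.Normal → N.Normal → P.Normal →
      Disjoint M N → Disjoint M P → N ⊔ P = ⊤ → ∀ x ∈ M, ∀ y : G, x * y = y * x := by
    intro M N P hM hN hP dMN dMP hNP x hx y
    have hy : y ∈ Subgroup.centralizer (M : Set G) := by
      have hsub : N ⊔ P ≤ Subgroup.centralizer (M : Set G) := by
        refine sup_le ?_ ?_
        · intro z hz
          rw [Subgroup.mem_centralizer_iff]
          intro m hm
          exact Subgroup.commute_of_normal_of_disjoint M N hM hN dMN m z hm hz
        · intro z hz
          rw [Subgroup.mem_centralizer_iff]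
          intro m hm
          exact Subgroup.commute_of_normal_of_disjoint M P hM hP dMP m z hm hz
      exact hsub (hNP ▸ Subgroup.mem_top y)
    exact Subgroup.mem_centralizer_iff.mp hy x hx
  have h1c : ∀ x ∈ N₁, ∀ y : G, x * y = y * x :=
    hc N₁ N₂ N₃ hn1 hn2 hn3 d12 d13 (hgen N₂ N₃ hn2 hn3 b2 t2 b3 t3 h23)
  have h2c : ∀ x ∈ N₂, ∀ y : G, x * y = y * x :=
    hc N₂ N₁ N₃ hn2 hn1 hn3 d12.symm d23 (hgen N₁ N₃ hn1 hn3 b1 t1 b3 t3 h13)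
  have hsup12 : N₁ ⊔ N₂ = ⊤ := hgen N₁ N₂ hn1 hn2 b1 t1 b2 t2 h12
  -- `G` is commutative
  have hcomm : ∀ x y : G, x * y = y * x := by
    intro x y
    have hx : x ∈ Subgroup.centralizer ({y} : Set G) := by
      have hsub : N₁ ⊔ N₂ ≤ Subgroup.centralizer ({y} : Set G) := by
        refine sup_le ?_ ?_
        · intro z hz
          rw [Subgroup.mem_centralizer_iff]
          intro m hm
          rw [Set.mem_singleton_iff] at hm
          subst hm
          exact (h1c z hz m).symm
        · intro z hz
          rw [Subgroup.mem_centralizer_iff]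
          intro m hm
          rw [Set.mem_singleton_iff] at hm
          subst hm
          exact (h2c z hz m).symm
      exact hsub (hsup12 ▸ Subgroup.mem_top x)
    exact (Subgroup.mem_centralizer_iff.mp hx y rfl).symm
  letI : CommGroup G := { (inferInstance : Group G) with mul_comm := hcomm }
  -- each of the three subgroups is simple, hence of prime order
  have hsimple : ∀ N : Subgroup G, N.Normal → ⊥ < N → N < ⊤ → IsSimpleGroup N := by
    intro N hN bN tN
    haveI : Nontrivial N := N.nontrivial_iff_ne_bot.mpr bN.ne'
    constructor
    intro H _
    set K := H.map N.subtype with hK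
    have hKle : K ≤ N := by
      rw [hK]
      rintro x ⟨y, _, rfl⟩
      exact y.2
    have hKnormal : K.Normal := by
      constructor
      intro x hx g
      rwa [show g * x * g⁻¹ = x by rw [hcomm g x, mul_assoc, mul_inv_cancel, mul_one]]
    rcases eq_or_ne K ⊥ with hKb | hKb
    · left
      refine Subgroup.map_injective N.subtype_injective ?_
      rw [Subgroup.map_bot]
      exact hKb
    rcases eq_or_ne K N with hKt | hKt
    · right
      refine Subgroup.map_injective N.subtype_injective ?_
      rw [← Subgroup.range_subtype N, MonoidHom.range_eq_map] at hKt
      exact hKt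
    · exfalso
      have := hgen K N hKnormal hN (bot_lt_iff_ne_bot.mpr hKb)
        (lt_of_le_of_lt hKle tN) bN tN hKt
      rw [sup_eq_right.mpr hKle] at this
      exact tN.ne this
  haveI s1 := hsimple N₁ hn1 b1 t1
  haveI s2 := hsimple N₂ hn2 b2 t2
  have hp : (Nat.card N₁).Prime := IsSimpleGroup.prime_card
  have hq : (Nat.card N₂).Prime := IsSimpleGroup.prime_card
  -- complements and cardinalities
  have hcompl : ∀ M N : Subgroup G, N.Normal → Disjoint M N → M ⊔ N = ⊤ →
      Subgroup.IsComplement' M N := by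
    intro M N hN dMN hMN
    refine Subgroup.isComplement'_of_disjoint_and_mul_eq_univ dMN ?_
    haveI := hN
    rw [← Subgroup.mul_normal M N, hMN]
    rfl
  have c12 := hcompl N₁ N₂ hn2 d12 hsup12
  have c13 := hcompl N₁ N₃ hn3 d13 (hgen N₁ N₃ hn1 hn3 b1 t1 b3 t3 h13)
  have c23 := hcompl N₂ N₃ hn3 d23 (hgen N₂ N₃ hn2 hn3 b2 t2 b3 t3 h23)
  have hcard12 := c12.card_mul
  have hcard13 := c13.card_mul
  have hcard23 := c23.card_mul
  have hpq : Nat.card N₁ = Nat.card N₂ := by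
    have h3pos : 0 < Nat.card N₃ := Nat.card_pos
    exact Nat.eq_of_mul_eq_mul_right h3pos (hcard13.trans hcard23.symm)
  set p := Nat.card N₁ with hpdef
  haveI : Fact p.Prime := ⟨hp⟩
  refine ⟨p, hp, ?_⟩
  -- the multiplication map `N₁ × N₂ → G` is a group isomorphism
  have hbij : Function.Bijective (fun x : N₁ × N₂ => (x.1 : G) * (x.2 : G)) := c12
  let φ : N₁ × N₂ →* G := MonoidHom.coprod N₁.subtype N₂.subtype
  have hφbij : Function.Bijective φ := hbij
  let e₂ : N₁ × N₂ ≃* G := MulEquiv.ofBijective φ hφbij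
  have hzp : Nat.card (Multiplicative (ZMod p)) = p := by
    rw [Nat.card_eq_of_bijective _ (MulEquiv.refl _ : Multiplicative (ZMod p) ≃* _).bijective]
    exact Nat.card_zmod p
  have hcard1 : Nat.card N₁ = p := rfl
  have hcard2 : Nat.card N₂ = p := hpq.symm
  let e₁ : N₁ ≃* Multiplicative (ZMod p) := mulEquivOfPrimeCardEq hcard1 hzp
  let e₁' : N₂ ≃* Multiplicative (ZMod p) := mulEquivOfPrimeCardEq hcard2 hzp
  exact ⟨e₂.symm.trans ((e₁.prodCongr e₁').trans (MulEquiv.prodMultiplicative (G := ZMod p) (H := ZMod p)).symm)⟩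
end

section
/- If an automorphism of C_p × C_p stabilizes three distinct subgroups of order p, then it acts as a power map g ↦ g^i for some integer i, and hence stabilizes every subgroup. -/
open AddSubgroup

section aux

variable {p : ℕ} [hp : Fact p.Prime]

private lemma aux_zmod_smul (c : ZMod p) (v : ZMod p × ZMod p) : c • v = c.val • v := by
  ext <;> simp [nsmul_eq_mul, ZMod.natCast_val, ZMod.cast_id, Prod.smul_fst, Prod.smul_snd,
    smul_eq_mul]

private lemma aux_zsmul (n : ℤ) (v : ZMod p × ZMod p) : n • v = (n : ZMod p) • v := by
  ext <;> simp [zsmul_eq_mul, Prod.smul_fst, Prod.smul_snd, smul_eq_mul]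

private lemma aux_smul_ne_zero {c : ZMod p} {v : ZMod p × ZMod p} (hc : c ≠ 0) (hv : v ≠ 0) :
    c • v ≠ 0 := by
  intro h
  apply hv
  have := congrArg (fun w => c⁻¹ • w) h
  simpa [smul_smul, inv_mul_cancel₀ hc] using this

/-- An order-`p` subgroup equals the cyclic group generated by any nonzero element of it. -/
private lemma aux_zmultiples {S : AddSubgroup (ZMod p × ZMod p)} (hS : Nat.card S = p)
    {v : ZMod p × ZMod p} (hv : v ∈ S) (hv0 : v ≠ 0) : zmultiples v = S := by
  have : Finite S := Nat.finite_of_card_ne_zero (by rw [hS]; exact hp.out.pos.ne')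
  have hpsmul : p • v = 0 := by ext <;> simp [nsmul_eq_mul]
  have hord : addOrderOf v = p := by
    have hdvd : addOrderOf v ∣ p := addOrderOf_dvd_of_nsmul_eq_zero hpsmul
    rcases Nat.Prime.eq_one_or_self_of_dvd hp.out _ hdvd with h | h
    · exact absurd (AddMonoid.addOrderOf_eq_one_iff.mp h) hv0
    · exact h
  refine AddSubgroup.eq_of_le_of_card_ge (zmultiples_le.mpr hv) ?_
  rw [hS, Nat.card_zmultiples, hord]

private lemma aux_key (f : (ZMod p × ZMod p) ≃+ (ZMod p × ZMod p))
    (S₁ S₂ S₃ : AddSubgroup (ZMod p × ZMod p))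
    (h₁ : Nat.card S₁ = p) (h₂ : Nat.card S₂ = p) (h₃ : Nat.card S₃ = p)
    (h12 : S₁ ≠ S₂) (h13 : S₁ ≠ S₃) (h23 : S₂ ≠ S₃)
    (st₁ : ∀ x ∈ S₁, f x ∈ S₁) (st₂ : ∀ x ∈ S₂, f x ∈ S₂) (st₃ : ∀ x ∈ S₃, f x ∈ S₃) :
    ∃ c : ZMod p, ∀ x, f x = c • x := by
  have hp1 : 1 < p := hp.out.one_lt
  -- pick nonzero generators
  have pick : ∀ S : AddSubgroup (ZMod p × ZMod p), Nat.card S = p →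
      ∃ v, v ∈ S ∧ v ≠ 0 := by
    intro S hS
    by_contra h
    push_neg at h
    have : S = ⊥ := by
      ext x
      simp only [AddSubgroup.mem_bot]
      exact ⟨fun hx => h x hx, fun hx => hx ▸ S.zero_mem⟩
    rw [this] at hS
    simp at hS
    omega
  obtain ⟨v₁, hv₁, hv₁0⟩ := pick S₁ h₁
  obtain ⟨v₂, hv₂, hv₂0⟩ := pick S₂ h₂
  obtain ⟨v₃, hv₃, hv₃0⟩ := pick S₃ h₃
  have hz₁ : zmultiples v₁ = S₁ := aux_zmultiples h₁ hv₁ hv₁0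
  have hz₂ : zmultiples v₂ = S₂ := aux_zmultiples h₂ hv₂ hv₂0
  have hz₃ : zmultiples v₃ = S₃ := aux_zmultiples h₃ hv₃ hv₃0
  have hsmul_mem : ∀ (c : ZMod p) (v : ZMod p × ZMod p) (S : AddSubgroup (ZMod p × ZMod p)),
      v ∈ S → c • v ∈ S := by
    intro c v S hv
    rw [aux_zmod_smul]
    exact AddSubgroup.nsmul_mem S hv _
  have hfin : ∀ S : AddSubgroup (ZMod p × ZMod p), Finite S := fun S => inferInstance
  -- distinct prime subgroups share only 0; independence
  have indep : ∀ (S T : AddSubgroup (ZMod p × ZMod p)), Nat.card S = p → Nat.card T = p →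
      S ≠ T → ∀ w, w ∈ S → w ∈ T → w = 0 := by
    intro S T hS hT hST w hwS hwT
    by_contra hw0
    have e1 : zmultiples w = S := aux_zmultiples hS hwS hw0
    have e2 : zmultiples w = T := aux_zmultiples hT hwT hw0
    exact hST (e1 ▸ e2)
  have dep : ∀ (x y : ZMod p), x • v₁ = y • v₂ → x = 0 ∧ y = 0 := by
    intro x y hxy
    by_cases hx : x = 0
    · subst hx
      constructor
      · rfl
      · by_contra hy
        exact aux_smul_ne_zero hy hv₂0 (by rw [← hxy]; simp)
    · exfalso
      have hmem : x • v₁ ∈ S₁ := hsmul_mem x v₁ S₁ hv₁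
      have hmem2 : x • v₁ ∈ S₂ := hxy ▸ hsmul_mem y v₂ S₂ hv₂
      exact aux_smul_ne_zero hx hv₁0 (indep S₁ S₂ h₁ h₂ h12 _ hmem hmem2)
  -- determinant nonzero
  have hD0 : v₁.1 * v₂.2 - v₁.2 * v₂.1 ≠ 0 := by
    intro h0
    have hdet : v₁.1 * v₂.2 = v₁.2 * v₂.1 := sub_eq_zero.mp h0
    have e1 : v₂.2 • v₁ = v₁.2 • v₂ := by
      ext
      · simp only [Prod.smul_fst, smul_eq_mul]; linear_combination hdet
      · simp only [Prod.smul_snd, smul_eq_mul]; ring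
    have e2 : v₂.1 • v₁ = v₁.1 • v₂ := by
      ext
      · simp only [Prod.smul_fst, smul_eq_mul]; ring
      · simp only [Prod.smul_snd, smul_eq_mul]; linear_combination - hdet
    obtain ⟨hA, hB⟩ := dep _ _ e1
    obtain ⟨hC, hE⟩ := dep _ _ e2
    apply hv₁0
    exact Prod.ext hE hB
  -- spanning
  have repr : ∀ x : ZMod p × ZMod p, ∃ α β : ZMod p, x = α • v₁ + β • v₂ := by
    intro x
    refine ⟨(x.1 * v₂.2 - x.2 * v₂.1) / (v₁.1 * v₂.2 - v₁.2 * v₂.1),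
      (v₁.1 * x.2 - v₁.2 * x.1) / (v₁.1 * v₂.2 - v₁.2 * v₂.1), ?_⟩
    have hD0' : v₂.2 * v₁.1 - v₂.1 * v₁.2 ≠ 0 := by
      rw [mul_comm v₂.2, mul_comm v₂.1]; exact hD0
    ext <;> simp [Prod.smul_fst, Prod.smul_snd, smul_eq_mul] <;> field_simp [hD0'] <;> ring
  -- eigenvalues
  have eigen : ∀ (v : ZMod p × ZMod p) (S : AddSubgroup (ZMod p × ZMod p)),
      zmultiples v = S → (∀ x ∈ S, f x ∈ S) → v ∈ S → ∃ c : ZMod p, f v = c • v := by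
    intro v S hzS hst hvS
    have : f v ∈ zmultiples v := hzS ▸ hst v hvS
    obtain ⟨n, hn⟩ := this
    exact ⟨(n : ZMod p), by rw [← hn, ← aux_zsmul]⟩
  obtain ⟨c₁, hc₁⟩ := eigen v₁ S₁ hz₁ st₁ hv₁
  obtain ⟨c₂, hc₂⟩ := eigen v₂ S₂ hz₂ st₂ hv₂
  obtain ⟨c₃, hc₃⟩ := eigen v₃ S₃ hz₃ st₃ hv₃
  -- f is ZMod p-linear
  have flin : ∀ (c : ZMod p) (v : ZMod p × ZMod p), f (c • v) = c • f v := by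
    intro c v
    rw [aux_zmod_smul, map_nsmul, ← aux_zmod_smul]
  -- write v₃ in the basis, with nonzero coefficients
  obtain ⟨α, β, hαβ⟩ := repr v₃
  have hα0 : α ≠ 0 := by
    intro h
    subst h
    rw [zero_smul, zero_add] at hαβ
    have : v₃ ∈ S₂ := hαβ ▸ hsmul_mem β v₂ S₂ hv₂
    exact hv₃0 (indep S₃ S₂ h₃ h₂ h23.symm v₃ hv₃ this)
  have hβ0 : β ≠ 0 := by
    intro h
    subst h
    rw [zero_smul, add_zero] at hαβ
    have : v₃ ∈ S₁ := hαβ ▸ hsmul_mem α v₁ S₁ hv₁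
    exact hv₃0 (indep S₃ S₁ h₃ h₁ h13.symm v₃ hv₃ this)
  -- equate the two expressions for f v₃
  have heq : ((c₃ - c₁) * α) • v₁ = ((c₂ - c₃) * β) • v₂ := by
    have := hc₃
    rw [hαβ, map_add, flin, flin, hc₁, hc₂, smul_add, smul_smul, smul_smul, smul_smul,
      smul_smul] at this
    linear_combination (norm := module) -this
  obtain ⟨e1, e2⟩ := dep _ _ heq
  have hc31 : c₃ = c₁ := by
    rcases mul_eq_zero.mp e1 with h | h
    · exact sub_eq_zero.mp h
    · exact absurd h hα0
  have hc32 : c₂ = c₃ := by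
    rcases mul_eq_zero.mp e2 with h | h
    · exact sub_eq_zero.mp h
    · exact absurd h hβ0
  refine ⟨c₁, fun x => ?_⟩
  obtain ⟨γ, δ, hx⟩ := repr x
  rw [hx, map_add, flin, flin, hc₁, hc₂, hc32, hc31, smul_add, smul_smul, smul_smul,
    smul_smul, smul_smul, mul_comm γ c₁, mul_comm δ c₁]

end aux

/-- If an automorphism of `C_p × C_p` stabilizes three distinct subgroups of order `p`, then it
is a power map `g ↦ g ^ i`, and hence stabilizes every subgroup. -/
theorem stmt_8 (p : ℕ) [Fact p.Prime]
    (a : MulAut (Multiplicative (ZMod p × ZMod p)))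
    (H₁ H₂ H₃ : Subgroup (Multiplicative (ZMod p × ZMod p)))
    (h₁ : Nat.card H₁ = p) (h₂ : Nat.card H₂ = p) (h₃ : Nat.card H₃ = p)
    (h12 : H₁ ≠ H₂) (h13 : H₁ ≠ H₃) (h23 : H₂ ≠ H₃)
    (ha₁ : H₁.map a.toMonoidHom = H₁) (ha₂ : H₂.map a.toMonoidHom = H₂)
    (ha₃ : H₃.map a.toMonoidHom = H₃) :
    ∃ i : ℤ, (∀ g : Multiplicative (ZMod p × ZMod p), a g = g ^ i) ∧
      ∀ H : Subgroup (Multiplicative (ZMod p × ZMod p)), H.map a.toMonoidHom = H := by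
  set f : (ZMod p × ZMod p) ≃+ (ZMod p × ZMod p) := MulEquiv.toAdditive a with hf
  have hstab : ∀ (H : Subgroup (Multiplicative (ZMod p × ZMod p))),
      H.map a.toMonoidHom = H → ∀ x : ZMod p × ZMod p,
      Multiplicative.ofAdd x ∈ H → Multiplicative.ofAdd (f x) ∈ H := by
    intro H hH x hx
    have : a (Multiplicative.ofAdd x) ∈ H.map a.toMonoidHom :=
      Subgroup.mem_map_of_mem _ hx
    rwa [hH] at this
  have hinj : Function.Injective (Subgroup.toAddSubgroup'
      (A := ZMod p × ZMod p)) := (Subgroup.toAddSubgroup').injective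
  obtain ⟨c, hc⟩ := aux_key f (Subgroup.toAddSubgroup' H₁) (Subgroup.toAddSubgroup' H₂)
    (Subgroup.toAddSubgroup' H₃) h₁ h₂ h₃
    (fun h => h12 (hinj h)) (fun h => h13 (hinj h)) (fun h => h23 (hinj h))
    (hstab H₁ ha₁) (hstab H₂ ha₂) (hstab H₃ ha₃)
  have hpow : ∀ g : Multiplicative (ZMod p × ZMod p), a g = g ^ (c.val : ℤ) := by
    intro g
    have hfg : f g.toAdd = c • g.toAdd := hc g.toAdd
    have : g ^ (c.val : ℤ) = Multiplicative.ofAdd ((c.val : ℤ) • g.toAdd) := rfl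
    rw [this]
    have h2 : ((c.val : ℤ)) • g.toAdd = c • g.toAdd := by
      rw [aux_zsmul]
      congr 1
      push_cast
      simp [ZMod.natCast_val, ZMod.cast_id]
    rw [h2, ← hfg]
    rfl
  refine ⟨(c.val : ℤ), hpow, ?_⟩
  intro H
  have hle : H.map a.toMonoidHom ≤ H := by
    rintro _ ⟨g, hg, rfl⟩
    have : a g = g ^ (c.val : ℤ) := hpow g
    rw [show a.toMonoidHom g = a g from rfl, this]
    exact H.zpow_mem hg _
  refine Subgroup.eq_of_le_of_card_ge hle ?_
  exact le_of_eq (Nat.card_congr (H.equivMapOfInjective _ a.injective).toEquiv)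
end

section
/- Let H₁, …, H_{p+1} be the subgroups of order p of G = C_p × C_p, and for I ⊆ {1, …, p+1} let N_I = ⋃_{i∈I} (H_i ∖ {1}). Then for any I, J the product of class sums satisfies N̂_I · N̂_J = (|I|−1)(|J|−1)·Ĝ + |J|·∑_{L≠I} N̂_L + |I|·∑_{L≠J} N̂_L + c·1 for appropriate nonnegative integers, where the coefficient of each N̂_L is a nonnegative integer; in particular N̂_I · N̂_J is a nonnegative integer linear combination of 1, and the N̂_L for L ranging over the parts of any partition containing I and J. -/
open scoped Classical

/-- The sum `Ŝ = ∑_{g ∈ S} g` of a subset of a finite group inside its integral group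
algebra. -/
noncomputable def hatSet {G : Type} [Group G] [Fintype G] (S : Set G) : MonoidAlgebra ℤ G :=
  ∑ g : S, MonoidAlgebra.single (g : G) 1

lemma hatSet_eq {G : Type} [Group G] [Fintype G] (S : Set G) :
    hatSet S = ∑ g ∈ S.toFinset, MonoidAlgebra.single (g : G) 1 := by
  rw [hatSet]; exact Finset.sum_set_coe (f := fun g : G => MonoidAlgebra.single g (1:ℤ)) S

lemma hatSet_union {G : Type} [Group G] [Fintype G] (S T : Set G) (h : Disjoint S T) :
    hatSet (S ∪ T) = hatSet S + hatSet T := by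
  rw [hatSet_eq, hatSet_eq, hatSet_eq, Set.toFinset_union,
    Finset.sum_union (by rwa [Set.disjoint_toFinset])]

lemma hatSet_diff_one {G : Type} [Group G] [Fintype G] (K : Subgroup G) :
    hatSet ((K : Set G) \ {1}) = hatSet (K : Set G) - 1 := by
  rw [hatSet_eq, hatSet_eq, Set.toFinset_diff,
    Finset.sum_sdiff_eq_sub (by simp [Finset.subset_iff, one_mem]), MonoidAlgebra.one_def]
  simp

lemma hatSet_biUnion {G : Type} [Group G] [Fintype G] {ι : Type} (I : Finset ι)
    (S : ι → Set G) (h : ∀ i ∈ I, ∀ j ∈ I, i ≠ j → Disjoint (S i) (S j)) :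
    hatSet (⋃ i ∈ (I : Set ι), S i) = ∑ i ∈ I, hatSet (S i) := by
  induction I using Finset.induction with
  | empty => simp [hatSet_eq]
  | @insert a s ha ih =>
    rw [Finset.coe_insert, Set.biUnion_insert, hatSet_union, Finset.sum_insert ha,
      ih (fun i hi j hj hij => h i (Finset.mem_insert_of_mem hi) j (Finset.mem_insert_of_mem hj) hij)]
    rw [Set.disjoint_iUnion_right]
    intro i
    rw [Set.disjoint_iUnion_right]
    intro hi
    exact h a (Finset.mem_insert_self a s) i (Finset.mem_insert_of_mem hi)
      (by rintro rfl; exact ha hi)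

lemma single_mul_hatSet {G : Type} [Group G] [Fintype G] (K : Subgroup G) {a : G} (ha : a ∈ K) :
    MonoidAlgebra.single a (1:ℤ) * hatSet (K : Set G) = hatSet (K : Set G) := by
  rw [hatSet, Finset.mul_sum]
  simp only [MonoidAlgebra.single_mul_single, one_mul]
  refine Fintype.sum_bijective (fun x : (K : Set G) => (⟨a * x, mul_mem ha x.2⟩ : (K : Set G)))
    ?_ _ _ (fun x => rfl)
  constructor
  · rintro ⟨x, hx⟩ ⟨y, hy⟩ hxy
    simpa [Subtype.ext_iff] using hxy
  · rintro ⟨y, hy⟩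
    exact ⟨⟨a⁻¹ * y, mul_mem (inv_mem ha) hy⟩, by simp [Subtype.ext_iff]⟩

lemma hatSet_subgroup_sq {G : Type} [Group G] [Fintype G] (K : Subgroup G) :
    hatSet (K : Set G) * hatSet (K : Set G) = (Nat.card K : ℤ) • hatSet (K : Set G) := by
  nth_rewrite 1 [hatSet]
  rw [Finset.sum_mul]
  rw [Finset.sum_congr rfl fun (x : (K : Set G)) _ => single_mul_hatSet K x.2,
    Finset.sum_const, Finset.card_univ]
  rw [Nat.card_eq_fintype_card, natCast_zsmul]
  rfl

lemma hatSet_univ {G : Type} [Group G] [Fintype G] :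
    hatSet (Set.univ : Set G) = ∑ g : G, MonoidAlgebra.single g (1:ℤ) := by
  rw [hatSet_eq]
  apply Finset.sum_congr _ (fun _ _ => rfl)
  ext g; simp

lemma hatSet_subgroup_mul {G : Type} [Group G] [Fintype G] (K L : Subgroup G)
    (hKL : K ⊓ L = ⊥) (hc : Nat.card K * Nat.card L = Nat.card G) :
    hatSet (K : Set G) * hatSet (L : Set G) = hatSet (Set.univ : Set G) := by
  have step1 : hatSet (K : Set G) * hatSet (L : Set G)
      = ∑ x : (↥(K : Set G)) × (↥(L : Set G)),
          MonoidAlgebra.single ((x.1 : G) * (x.2 : G)) (1:ℤ) := by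
    rw [hatSet, hatSet, Finset.sum_mul_sum]
    simp only [MonoidAlgebra.single_mul_single, one_mul]
    exact (Fintype.sum_prod_type'
      (f := fun (x : ↥(K : Set G)) (y : ↥(L : Set G)) =>
        MonoidAlgebra.single ((x : G) * (y : G)) (1:ℤ))).symm
  rw [step1, hatSet_univ]
  refine Fintype.sum_bijective
    (fun x : (↥(K : Set G)) × (↥(L : Set G)) => (x.1 : G) * x.2)
    ?_ (fun x => MonoidAlgebra.single ((x.1 : G) * (x.2 : G)) (1:ℤ))
    (fun g => MonoidAlgebra.single g (1:ℤ)) (fun x => rfl)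
  rw [Fintype.bijective_iff_injective_and_card]
  constructor
  · rintro ⟨⟨a, ha⟩, ⟨b, hb⟩⟩ ⟨⟨a', ha'⟩, ⟨b', hb'⟩⟩ hab
    simp only at hab
    have key : a'⁻¹ * a = b' * b⁻¹ := by
      have := congrArg (fun x => a'⁻¹ * x * b⁻¹) hab
      simpa [mul_assoc] using this
    have hmem : a'⁻¹ * a ∈ K ⊓ L := by
      refine ⟨K.mul_mem (K.inv_mem ha') ha, ?_⟩
      rw [key]; exact L.mul_mem hb' (L.inv_mem hb)
    rw [hKL, Subgroup.mem_bot] at hmem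
    have haa : a' = a := inv_mul_eq_one.mp hmem
    have hbb : b = b' := by
      rw [haa] at hab
      exact mul_left_cancel hab
    simp [Prod.ext_iff, Subtype.ext_iff, haa, hbb]
  · rw [Fintype.card_prod]
    have h1 : Fintype.card (↥(K : Set G)) = Nat.card K := by
      rw [Nat.card_eq_fintype_card]; rfl
    have h2 : Fintype.card (↥(L : Set G)) = Nat.card L := by
      rw [Nat.card_eq_fintype_card]; rfl
    rw [h1, h2, hc, Nat.card_eq_fintype_card]
/-- For the subgroups `H₁, …, H_{p+1}` of order `p` of `G = C_p × C_p` and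
`N_I = ⋃_{i ∈ I} (H_i ∖ {1})`, the class sums `N̂_I` multiply as follows: for disjoint `I, J`
(e.g. distinct parts of a partition),
`N̂_I·N̂_J = |I||J|·Ĝ − |J|·N̂_I − |I|·N̂_J − |I||J|·1`, and for `I = J` the corrected identity
`N̂_I² = |I|(|I|−1)·Ĝ + (p − 2|I|)·N̂_I + |I|(p − |I|)·1` holds; in particular each such
product is an integer linear combination of `1`, `Ĝ` and the `N̂_L`. -/
theorem stmt_16 (p : ℕ) [Fact p.Prime]
    (H : Fin (p + 1) → Subgroup (Multiplicative (ZMod p × ZMod p)))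
    (hinj : Function.Injective H) (hcard : ∀ i, Nat.card (H i) = p)
    (Nhat : Finset (Fin (p + 1)) → MonoidAlgebra ℤ (Multiplicative (ZMod p × ZMod p)))
    (hNhat : ∀ I, Nhat I = hatSet (⋃ i ∈ (I : Set (Fin (p + 1))),
      ((H i : Set (Multiplicative (ZMod p × ZMod p))) \ {1})))
    (Ghat : MonoidAlgebra ℤ (Multiplicative (ZMod p × ZMod p)))
    (hGhat : Ghat = hatSet (Set.univ : Set (Multiplicative (ZMod p × ZMod p))))
    (I J : Finset (Fin (p + 1))) :
    (Disjoint I J →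
      Nhat I * Nhat J =
        ((I.card : ℤ) * J.card) • Ghat - (J.card : ℤ) • Nhat I - (I.card : ℤ) • Nhat J
          - ((I.card : ℤ) * J.card) • (1 : MonoidAlgebra ℤ (Multiplicative (ZMod p × ZMod p)))) ∧
    (Nhat I * Nhat I =
      ((I.card : ℤ) * ((I.card : ℤ) - 1)) • Ghat + ((p : ℤ) - 2 * I.card) • Nhat I
        + ((I.card : ℤ) * ((p : ℤ) - I.card)) •
            (1 : MonoidAlgebra ℤ (Multiplicative (ZMod p × ZMod p)))) := by
  have hp : p.Prime := Fact.out
  have hcardG : Nat.card (Multiplicative (ZMod p × ZMod p)) = p * p := by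
    rw [Nat.card_congr Multiplicative.ofAdd.symm, Nat.card_prod, Nat.card_zmod]
  have hbot : ∀ i j, i ≠ j → H i ⊓ H j = ⊥ := by
    intro i j hij
    have hdvd : Nat.card ↥(H i ⊓ H j) ∣ p := by
      have := Subgroup.card_dvd_of_le (inf_le_left : H i ⊓ H j ≤ H i)
      rwa [hcard i] at this
    rcases hp.eq_one_or_self_of_dvd _ hdvd with h1 | hP
    · exact Subgroup.card_eq_one.mp h1
    · exfalso
      have e1 : H i ⊓ H j = H i :=
        Subgroup.eq_of_le_of_card_ge inf_le_left (by rw [hcard, hP])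
      have e2 : H i ⊓ H j = H j :=
        Subgroup.eq_of_le_of_card_ge inf_le_right (by rw [hcard, hP])
      exact hij (hinj (e1.symm.trans e2))
  have hdisjSet : ∀ i j : Fin (p+1), i ≠ j →
      Disjoint ((H i : Set (Multiplicative (ZMod p × ZMod p))) \ {1})
        ((H j : Set (Multiplicative (ZMod p × ZMod p))) \ {1}) := by
    intro i j hij
    rw [Set.disjoint_left]
    rintro x ⟨hxi, hx1⟩ ⟨hxj, -⟩
    apply hx1
    have hx : x ∈ H i ⊓ H j := ⟨hxi, hxj⟩
    rw [hbot i j hij, Subgroup.mem_bot] at hx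
    simpa using hx
  have hN : ∀ K : Finset (Fin (p+1)), Nhat K =
      (∑ i ∈ K, hatSet (H i : Set (Multiplicative (ZMod p × ZMod p))))
        - (K.card : ℤ) • 1 := by
    intro K
    rw [hNhat, hatSet_biUnion K _ (fun i _ j _ hij => hdisjSet i j hij),
      Finset.sum_congr rfl (fun i _ => hatSet_diff_one (H i)),
      Finset.sum_sub_distrib, Finset.sum_const, natCast_zsmul]
  have hHmul : ∀ i j, i ≠ j →
      hatSet (H i : Set (Multiplicative (ZMod p × ZMod p)))
        * hatSet (H j : Set (Multiplicative (ZMod p × ZMod p))) = Ghat := by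
    intro i j hij
    rw [hGhat]
    exact hatSet_subgroup_mul _ _ (hbot i j hij) (by rw [hcard, hcard, hcardG])
  have hsq : ∀ i, hatSet (H i : Set (Multiplicative (ZMod p × ZMod p)))
      * hatSet (H i : Set (Multiplicative (ZMod p × ZMod p)))
      = (p : ℤ) • hatSet (H i : Set (Multiplicative (ZMod p × ZMod p))) := by
    intro i
    rw [hatSet_subgroup_sq, hcard]
  constructor
  · intro hIJ
    have hSS : (∑ i ∈ I, hatSet (H i : Set (Multiplicative (ZMod p × ZMod p))))
        * (∑ j ∈ J, hatSet (H j : Set (Multiplicative (ZMod p × ZMod p))))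
        = ((I.card : ℤ) * J.card) • Ghat := by
      rw [Finset.sum_mul_sum,
        Finset.sum_congr rfl (fun i hi => Finset.sum_congr rfl (fun j hj =>
          hHmul i j (by rintro rfl; exact Finset.disjoint_left.mp hIJ hi hj))),
        Finset.sum_const, Finset.sum_const, smul_smul, ← natCast_zsmul, Nat.cast_mul]
    rw [hN I, hN J]
    simp only [zsmul_eq_mul] at hSS ⊢
    push_cast at hSS ⊢
    linear_combination hSS
  · have step : ∀ i ∈ I, (∑ j ∈ I, hatSet (H i : Set (Multiplicative (ZMod p × ZMod p)))
        * hatSet (H j : Set (Multiplicative (ZMod p × ZMod p))))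
        = ((I.card : ℤ) - 1) • Ghat
          + (p : ℤ) • hatSet (H i : Set (Multiplicative (ZMod p × ZMod p))) := by
      intro i hi
      rw [← Finset.add_sum_erase I _ hi, hsq i,
        Finset.sum_congr rfl (fun j hj => hHmul i j
          (fun h => (Finset.ne_of_mem_erase hj) h.symm)),
        Finset.sum_const, Finset.card_erase_of_mem hi, add_comm]
      congr 1
      rw [← natCast_zsmul]
      congr 1
      have h1 : 1 ≤ I.card := Finset.card_pos.mpr ⟨i, hi⟩
      omega
    have hSS : (∑ i ∈ I, hatSet (H i : Set (Multiplicative (ZMod p × ZMod p))))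
        * (∑ i ∈ I, hatSet (H i : Set (Multiplicative (ZMod p × ZMod p))))
        = ((I.card : ℤ) * ((I.card : ℤ) - 1)) • Ghat
          + (p : ℤ) • ∑ i ∈ I, hatSet (H i : Set (Multiplicative (ZMod p × ZMod p))) := by
      rw [Finset.sum_mul_sum, Finset.sum_congr rfl step, Finset.sum_add_distrib,
        Finset.sum_const, ← Finset.smul_sum, ← natCast_zsmul _ I.card, smul_smul]
    rw [hN I]
    simp only [zsmul_eq_mul] at hSS ⊢
    push_cast at hSS ⊢
    linear_combination hSS
end

section
/- Let G = C_p × C_p and let m₁, m₂ be integers coprime to p with multiplicative orders d₁, d₂ modulo p satisfying gcd(d₁, d₂) = 1. Let H = ⟨x⟩ and N = ⟨y⟩ be distinct subgroups of order p, and let B ≤ Aut(G) be generated by the automorphisms x^i y^j ↦ x^{m₁ i} y^j and x^i y^j ↦ x^i y^{m₂ j}. Then for any g ∉ H ∪ N, the B-orbit of g has size d₁d₂. -/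
/-- Let `G = C_p × C_p = ⟨x⟩ × ⟨y⟩`, let `m₁, m₂` be coprime to `p` with multiplicative orders
`d₁, d₂` modulo `p` satisfying `gcd(d₁, d₂) = 1`, and let `B ≤ Aut(G)` be generated by the
automorphisms `xⁱyʲ ↦ x^{m₁ i} yʲ` and `xⁱyʲ ↦ xⁱ y^{m₂ j}`. Then for any `g ∉ ⟨x⟩ ∪ ⟨y⟩`,
the `B`-orbit of `g` has size `d₁·d₂`. -/
theorem stmt_17 (p : ℕ) [Fact p.Prime] (m₁ m₂ : ℤ)
    (hm₁ : IsCoprime m₁ (p : ℤ)) (hm₂ : IsCoprime m₂ (p : ℤ))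
    (d₁ d₂ : ℕ) (hd₁ : d₁ = orderOf ((m₁ : ZMod p))) (hd₂ : d₂ = orderOf ((m₂ : ZMod p)))
    (hcop : Nat.Coprime d₁ d₂)
    (x y : Multiplicative (ZMod p × ZMod p))
    (hx : x = Multiplicative.ofAdd (1, 0)) (hy : y = Multiplicative.ofAdd (0, 1))
    (σ τ : MulAut (Multiplicative (ZMod p × ZMod p)))
    (hσ : ∀ v : ZMod p × ZMod p, σ (Multiplicative.ofAdd v)
      = Multiplicative.ofAdd (m₁ • v.1, v.2))
    (hτ : ∀ v : ZMod p × ZMod p, τ (Multiplicative.ofAdd v)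
      = Multiplicative.ofAdd (v.1, m₂ • v.2))
    (B : Subgroup (MulAut (Multiplicative (ZMod p × ZMod p))))
    (hB : B = Subgroup.closure {σ, τ})
    (g : Multiplicative (ZMod p × ZMod p))
    (hg : g ∉ (Subgroup.zpowers x : Set (Multiplicative (ZMod p × ZMod p)))
      ∪ (Subgroup.zpowers y : Set (Multiplicative (ZMod p × ZMod p)))) :
    (MulAction.orbit B g).ncard = d₁ * d₂ := by
  have hp : p.Prime := Fact.out
  have hpI : Prime (p : ℤ) := Nat.prime_iff_prime_int.mp hp
  -- m₁, m₂ are nonzero mod p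
  have hm₁0 : (m₁ : ZMod p) ≠ 0 := by
    rw [Ne, ZMod.intCast_zmod_eq_zero_iff_dvd]
    intro hdvd
    exact hpI.not_unit (hm₁.isUnit_of_dvd' hdvd dvd_rfl)
  have hm₂0 : (m₂ : ZMod p) ≠ 0 := by
    rw [Ne, ZMod.intCast_zmod_eq_zero_iff_dvd]
    intro hdvd
    exact hpI.not_unit (hm₂.isUnit_of_dvd' hdvd dvd_rfl)
  obtain ⟨u₁, hu₁⟩ := isUnit_iff_ne_zero.mpr hm₁0
  obtain ⟨u₂, hu₂⟩ := isUnit_iff_ne_zero.mpr hm₂0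
  -- write g = ofAdd (a, b)
  set a : ZMod p := (Multiplicative.toAdd g).1 with ha
  set b : ZMod p := (Multiplicative.toAdd g).2 with hb
  have hgab : g = Multiplicative.ofAdd (a, b) := rfl
  simp only [Set.mem_union, not_or] at hg
  obtain ⟨hgx, hgy⟩ := hg
  have ha0 : a ≠ 0 := by
    intro h
    apply hgy
    refine ⟨(b.val : ℤ), ?_⟩
    rw [hy]
    show Multiplicative.ofAdd _ ^ (b.val : ℤ) = g
    rw [← ofAdd_zsmul, hgab]
    congr 1
    simp [Prod.smul_def, h, ZMod.natCast_val, ZMod.intCast_cast, ZMod.cast_id]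
  have hb0 : b ≠ 0 := by
    intro h
    apply hgx
    refine ⟨(a.val : ℤ), ?_⟩
    rw [hx]
    show Multiplicative.ofAdd _ ^ (a.val : ℤ) = g
    rw [← ofAdd_zsmul, hgab]
    congr 1
    simp [Prod.smul_def, h, ZMod.natCast_val, ZMod.intCast_cast, ZMod.cast_id]
  -- power formulas
  have hσpow : ∀ (n : ℕ) (c d : ZMod p), (σ ^ n) (Multiplicative.ofAdd (c, d))
      = Multiplicative.ofAdd ((m₁ : ZMod p) ^ n * c, d) := by
    intro n
    induction n with
    | zero => intro c d; simp
    | succ n ih =>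
      intro c d
      rw [pow_succ, MulAut.mul_apply, hσ (c, d)]
      have : (m₁ • c : ZMod p) = (m₁ : ZMod p) * c := by
        rw [zsmul_eq_mul]
      rw [show ((m₁ • c, d) : ZMod p × ZMod p) = ((m₁ : ZMod p) * c, d) by rw [this], ih]
      congr 1
      rw [pow_succ]
      ring_nf
  have hτpow : ∀ (n : ℕ) (c d : ZMod p), (τ ^ n) (Multiplicative.ofAdd (c, d))
      = Multiplicative.ofAdd (c, (m₂ : ZMod p) ^ n * d) := by
    intro n
    induction n with
    | zero => intro c d; simp
    | succ n ih =>
      intro c d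
      rw [pow_succ, MulAut.mul_apply, hτ (c, d)]
      have : (m₂ • d : ZMod p) = (m₂ : ZMod p) * d := by
        rw [zsmul_eq_mul]
      rw [show ((c, m₂ • d) : ZMod p × ZMod p) = (c, (m₂ : ZMod p) * d) by rw [this], ih]
      congr 1
      rw [pow_succ]
      ring_nf
  -- the orbit set
  set φ : (ZMod p)ˣ × (ZMod p)ˣ → Multiplicative (ZMod p × ZMod p) :=
    fun w => Multiplicative.ofAdd ((w.1 : ZMod p) * a, (w.2 : ZMod p) * b) with hφ
  have horb : MulAction.orbit B g
      = φ '' ((Subgroup.zpowers u₁ : Set (ZMod p)ˣ) ×ˢ (Subgroup.zpowers u₂ : Set (ZMod p)ˣ)) := by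
    apply Set.eq_of_subset_of_subset
    · rintro z ⟨k, rfl⟩
      have hk : (k : MulAut (Multiplicative (ZMod p × ZMod p))) ∈ Subgroup.closure {σ, τ} := by
        rw [← hB]; exact k.2
      have key : ∀ f ∈ Subgroup.closure {σ, τ}, ∃ u ∈ Subgroup.zpowers u₁,
          ∃ v ∈ Subgroup.zpowers u₂, ∀ c d : ZMod p,
            f (Multiplicative.ofAdd (c, d))
              = Multiplicative.ofAdd ((u : ZMod p) * c, (v : ZMod p) * d) := by
        intro f hf
        induction hf using Subgroup.closure_induction with
        | mem f hf =>
          rcases hf with hf | hf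
          · refine ⟨u₁, Subgroup.mem_zpowers _, 1, one_mem _, fun c d => ?_⟩
            rw [hf, hσ (c, d)]
            simp [hu₁, zsmul_eq_mul]
          · refine ⟨1, one_mem _, u₂, Subgroup.mem_zpowers _, fun c d => ?_⟩
            rw [hf, hτ (c, d)]
            simp [hu₂, zsmul_eq_mul]
        | one => exact ⟨1, one_mem _, 1, one_mem _, fun c d => by simp⟩
        | mul f f' hf hf' ihf ihf' =>
          obtain ⟨u, hu, v, hv, hfor⟩ := ihf
          obtain ⟨u', hu', v', hv', hfor'⟩ := ihf'
          refine ⟨u * u', mul_mem hu hu', v * v', mul_mem hv hv', fun c d => ?_⟩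
          rw [MulAut.mul_apply, hfor' c d, hfor _ _]
          simp [mul_assoc]
        | inv f hf ihf =>
          obtain ⟨u, hu, v, hv, hfor⟩ := ihf
          refine ⟨u⁻¹, inv_mem hu, v⁻¹, inv_mem hv, fun c d => ?_⟩
          have : f (Multiplicative.ofAdd ((↑u⁻¹ * c : ZMod p), (↑v⁻¹ * d : ZMod p)))
              = Multiplicative.ofAdd (c, d) := by
            rw [hfor]
            congr 1
            rw [← mul_assoc, ← mul_assoc, Units.mul_inv, Units.mul_inv, one_mul, one_mul]
          rw [← this]
          exact f.symm_apply_apply _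
      obtain ⟨u, hu, v, hv, hfor⟩ := key _ hk
      refine ⟨(u, v), Set.mk_mem_prod hu hv, ?_⟩
      show φ (u, v) = (k : MulAut (Multiplicative (ZMod p × ZMod p))) g
      rw [hφ]
      simp only
      rw [hgab]
      exact (hfor a b).symm
    · rintro z ⟨⟨u, v⟩, ⟨hu, hv⟩, rfl⟩
      obtain ⟨n, hn⟩ := mem_powers_iff_mem_zpowers.mpr hu
      obtain ⟨m, hm⟩ := mem_powers_iff_mem_zpowers.mpr hv
      have hkB : σ ^ n * τ ^ m ∈ B := by
        rw [hB]
        exact mul_mem (pow_mem (Subgroup.subset_closure (by simp)) n)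
          (pow_mem (Subgroup.subset_closure (by simp)) m)
      refine ⟨⟨σ ^ n * τ ^ m, hkB⟩, ?_⟩
      show (σ ^ n * τ ^ m) g = φ (u, v)
      have hn' : u₁ ^ n = u := hn
      have hm' : u₂ ^ m = v := hm
      have e1 : ((u : ZMod p)) = (m₁ : ZMod p) ^ n := by rw [← hn']; push_cast [hu₁]; ring
      have e2 : ((v : ZMod p)) = (m₂ : ZMod p) ^ m := by rw [← hm']; push_cast [hu₂]; ring
      rw [hgab, MulAut.mul_apply, hτpow m a b, hσpow n _ _, hφ]
      simp only [e1, e2]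
  -- injectivity of φ
  have hinj : Function.Injective φ := by
    rintro ⟨u, v⟩ ⟨u', v'⟩ h
    rw [hφ] at h
    simp only [EmbeddingLike.apply_eq_iff_eq, Prod.mk.injEq] at h
    obtain ⟨h1, h2⟩ := h
    have hu : u = u' := Units.ext (mul_left_injective₀ ha0 h1)
    have hv : v = v' := Units.ext (mul_left_injective₀ hb0 h2)
    simp [hu, hv]
  rw [horb, Set.ncard_image_of_injective _ hinj]
  rw [← Nat.card_coe_set_eq]
  rw [Nat.card_congr (Equiv.Set.prod _ _)]
  rw [Nat.card_prod]
  rw [Nat.card_coe_set_eq, Nat.card_coe_set_eq]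
  have h1 : (Subgroup.zpowers u₁ : Set (ZMod p)ˣ).ncard = d₁ := by
    rw [← Nat.card_coe_set_eq]
    have : Nat.card (Subgroup.zpowers u₁) = orderOf u₁ := Nat.card_zpowers u₁
    rw [hd₁, ← hu₁, orderOf_units]
    exact this
  have h2 : (Subgroup.zpowers u₂ : Set (ZMod p)ˣ).ncard = d₂ := by
    rw [← Nat.card_coe_set_eq]
    have : Nat.card (Subgroup.zpowers u₂) = orderOf u₂ := Nat.card_zpowers u₂
    rw [hd₂, ← hu₂, orderOf_units]
    exact this
  rw [h1, h2]
end
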